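/- Existence of a minimal equilibrium of the fair-exchange game: if every agent's benefit function b_i is continuous, nondecreasing, and concave on [0, ∞) and satisfies the vanishing-marginal-value condition, then there exists a nonnegative collection profile X_* that is a pure Nash equilibrium and such that for every pure Nash equilibrium X' and every agent i, t_i(X_*) ≤ t_i(X'). -/

import Mathlib

open Finset

/-- Agent `i`'s total accessible data under fair exchange. -/
noncomputable def total {n : ℕ} (X : Fin n → ℝ) (i : Fin n) : ℝ :=
  X i + ∑ j ∈ univ.filter (fun j => j ≠ i), min (X i) (X j)

/-- Agent `i`'s utility. -/
noncomputable def U {n : ℕ} (b : Fin n → ℝ → ℝ) (c : Fin n → ℝ)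
    (X : Fin n → ℝ) (i : Fin n) : ℝ :=
  b i (total X i) - c i * X i

/-- `X` is a (nonnegative) pure Nash equilibrium of the fair-exchange game. -/
def IsNE {n : ℕ} (b : Fin n → ℝ → ℝ) (c : Fin n → ℝ) (X : Fin n → ℝ) : Prop :=
  (∀ i, 0 ≤ X i) ∧
    ∀ i, ∀ y, 0 ≤ y → U b c (Function.update X i y) i ≤ U b c X i

/-!
If agent `i`'s total grows at rate `m` when it collects more, collecting more stops paying off
once its total reaches `satiationLevel (b i) (c i / m)`; concavity, continuity and the vanishing
marginal value make this a well-defined threshold, nondecreasing in `m`. Call a vector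
of totals admissible if each agent's total is at least its threshold at the rate
`1 + #{agents strictly above}`. Totals of equilibria are admissible, and the componentwise
infimum `θ*` of all admissible vectors is again admissible and, at each agent, at most its
threshold at the rate `#{agents weakly above}` at which lowering its collection lowers its total.
Every nonnegative vector is the vector of totals of some profile, and a profile realizing `θ*`
is an equilibrium: upward deviations do not pay since `θ*` is admissible, downward ones since
`θ*` lies below the downward thresholds.
-/

open Filter Function Topology

theorem ConcaveOn.sub_le_mul_sub_of_sub_le_mul_sub {s : Set ℝ} {f : ℝ → ℝ}
    (hf : ConcaveOn ℝ s f) {x y z κ : ℝ} (hx : x ∈ s) (hz : z ∈ s) (hxy : x < y) (hyz : y ≤ z)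
    (h : f y - f x ≤ κ * (y - x)) : f z - f y ≤ κ * (z - y) := by
  rcases hyz.eq_or_lt with rfl | hyz
  · simp
  have hleft : (f y - f x) / (y - x) ≤ κ := (div_le_iff₀ (sub_pos.2 hxy)).2 h
  exact (div_le_iff₀ (sub_pos.2 hyz)).1 ((hf.slope_anti_adjacent hx hz hxy hyz).trans hleft)

theorem exists_pos_le_abs_sub {ι : Type*} [Finite ι] (f : ι → ℝ) (x : ℝ) :
    ∃ δ > 0, ∀ k, f k ≠ x → δ ≤ |f k - x| := by
  have hk : ∀ k, ∀ᶠ δ in 𝓝[>] (0 : ℝ), f k ≠ x → δ ≤ |f k - x| := fun k => by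
    by_cases hfk : f k = x
    · simp [hfk]
    · exact nhdsWithin_le_nhds <|
        (eventually_lt_nhds (abs_pos.2 (sub_ne_zero.2 hfk))).mono fun _ h _ => h.le
  exact ((eventually_all.2 hk).and self_mem_nhdsWithin).exists.imp fun _ h => ⟨h.2, h.1⟩

def satiatedSet (f : ℝ → ℝ) (κ : ℝ) : Set ℝ :=
  {T | 0 ≤ T ∧ ∀ u ≥ T, f u - f T ≤ κ * (u - T)}

noncomputable def satiationLevel (f : ℝ → ℝ) (κ : ℝ) : ℝ :=
  sInf (satiatedSet f κ)

section Satiation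

variable {f : ℝ → ℝ} {κ : ℝ}

theorem satiatedSet_bddBelow : BddBelow (satiatedSet f κ) :=
  ⟨0, fun _ hT => hT.1⟩

theorem satiationLevel_nonneg : 0 ≤ satiationLevel f κ :=
  Real.sInf_nonneg fun _ hT => hT.1

theorem satiationLevel_le {T : ℝ} (hT : T ∈ satiatedSet f κ) : satiationLevel f κ ≤ T :=
  csInf_le satiatedSet_bddBelow hT

theorem satiatedSet_mono {κ' : ℝ} (h : κ ≤ κ') : satiatedSet f κ ⊆ satiatedSet f κ' :=
  fun _ hT => ⟨hT.1, fun u hu => (hT.2 u hu).trans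
    (mul_le_mul_of_nonneg_right h (sub_nonneg.2 hu))⟩

theorem mem_satiatedSet_of_le (hf : ConcaveOn ℝ (Set.Ici 0) f) {T T' : ℝ}
    (hT : T ∈ satiatedSet f κ) (hTT' : T ≤ T') : T' ∈ satiatedSet f κ := by
  rcases hTT'.eq_or_lt with rfl | hlt
  · exact hT
  exact ⟨hT.1.trans hTT', fun u hu => hf.sub_le_mul_sub_of_sub_le_mul_sub hT.1
    (hT.1.trans (hTT'.trans hu)) hlt hu (hT.2 T' hTT')⟩

theorem satiatedSet_nonempty (hf : ConcaveOn ℝ (Set.Ici 0) f) (hκ : 0 < κ)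
    (hvan : Tendsto (fun t => f (t + 1) - f t) atTop (𝓝 0)) :
    (satiatedSet f κ).Nonempty := by
  obtain ⟨T, hT, hT0⟩ :=
    ((hvan.eventually (gt_mem_nhds hκ)).and (eventually_ge_atTop 0)).exists
  refine ⟨T + 1, by linarith, fun u hu => ?_⟩
  refine hf.sub_le_mul_sub_of_sub_le_mul_sub hT0 (by simp only [Set.mem_Ici]; linarith)
    (lt_add_one T) hu ?_
  simpa using hT.le

theorem satiationLevel_antitoneOn (hf : ConcaveOn ℝ (Set.Ici 0) f)
    (hvan : Tendsto (fun t => f (t + 1) - f t) atTop (𝓝 0)) :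
    AntitoneOn (satiationLevel f) (Set.Ioi 0) := fun _ hκ _ _ h =>
  csInf_le_csInf satiatedSet_bddBelow (satiatedSet_nonempty hf hκ hvan) (satiatedSet_mono h)

theorem satiationLevel_mem (hf : ConcaveOn ℝ (Set.Ici 0) f)
    (hcont : ContinuousOn f (Set.Ici 0)) (hκ : 0 < κ)
    (hvan : Tendsto (fun t => f (t + 1) - f t) atTop (𝓝 0)) :
    satiationLevel f κ ∈ satiatedSet f κ := by
  set L := satiationLevel f κ
  refine ⟨satiationLevel_nonneg, fun u hu => ?_⟩
  rcases hu.eq_or_lt with rfl | hlt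
  · simp
  have hclosure : L ∈ closure (Set.Iio u ∩ satiatedSet f κ) :=
    isOpen_Iio.inter_closure
      ⟨hlt, csInf_mem_closure (satiatedSet_nonempty hf hκ hvan) satiatedSet_bddBelow⟩
  have hcontL : ContinuousWithinAt f (Set.Iio u ∩ satiatedSet f κ) L :=
    (hcont L satiationLevel_nonneg).mono fun T hT => hT.2.1
  exact ContinuousWithinAt.closure_le hclosure (continuousWithinAt_const.sub hcontL)
    (continuousWithinAt_const.mul (continuousWithinAt_const.sub continuousWithinAt_id))
    fun T hT => hT.2.2 u hT.1.le

theorem mul_sub_le_sub_of_le_satiationLevel (hf : ConcaveOn ℝ (Set.Ici 0) f)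
    (hcont : ContinuousOn f (Set.Ici 0)) {s T : ℝ} (hs : 0 ≤ s) (hsT : s ≤ T)
    (hT : T ≤ satiationLevel f κ) : κ * (T - s) ≤ f T - f s := by
  rcases hsT.eq_or_lt with rfl | hlt
  · simp
  -- A point strictly below the satiation level has a steep forward chord, hence so has the
  -- chord from `s`; the bound at `T` itself follows by continuity.
  have hbelow : ∀ T' ∈ Set.Ioo s T, κ * (T' - s) ≤ f T' - f s := by
    intro T' ⟨hsT', hT'T⟩
    have hT' : T' ∉ satiatedSet f κ := fun hmem =>
      (satiationLevel_le hmem).not_gt (hT'T.trans_le hT)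
    have hT'0 : 0 ≤ T' := hs.trans hsT'.le
    obtain ⟨u, hu, hsteep⟩ : ∃ u ≥ T', κ * (u - T') < f u - f T' := by
      simpa [satiatedSet, hT'0, lt_sub_iff_add_lt] using hT'
    by_contra! hflat
    exact hsteep.not_ge <| hf.sub_le_mul_sub_of_sub_le_mul_sub hs (hT'0.trans hu) hsT' hu
      hflat.le
  have hcontT : ContinuousWithinAt f (Set.Ioo s T) T :=
    (hcont T (hs.trans hlt.le)).mono fun T' hT' => hs.trans hT'.1.le
  exact ContinuousWithinAt.closure_le (by simp [closure_Ioo hlt.ne, hlt.le])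
    (continuousWithinAt_const.mul (continuousWithinAt_id.sub continuousWithinAt_const))
    (hcontT.sub continuousWithinAt_const) hbelow

end Satiation

section Multipliers

variable {ι : Type*} [Fintype ι]

/-- Raising `X i` slightly raises agent `i`'s total at rate `upwardMultiplier X i`; lowering it
lowers the total at rate at least `downwardMultiplier X i`. -/
noncomputable def upwardMultiplier (X : ι → ℝ) (i : ι) : ℕ := #{j | X i < X j} + 1

noncomputable def downwardMultiplier (X : ι → ℝ) (i : ι) : ℕ := #{j | X i ≤ X j}

theorem one_le_upwardMultiplier (X : ι → ℝ) (i : ι) : 1 ≤ upwardMultiplier X i :=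
  Nat.le_add_left 1 _

theorem one_le_downwardMultiplier (X : ι → ℝ) (i : ι) : 1 ≤ downwardMultiplier X i :=
  card_pos.2 ⟨i, by simp⟩

theorem upwardMultiplier_const (C : ℝ) (i : ι) : upwardMultiplier (fun _ => C) i = 1 := by
  simp [upwardMultiplier]

theorem upwardMultiplier_le_upwardMultiplier {X Y : ι → ℝ} {i : ι}
    (h : ∀ k, X i < X k → Y i < Y k) : upwardMultiplier X i ≤ upwardMultiplier Y i :=
  Nat.add_le_add_right (card_le_card fun k hk => by simp_all) 1

theorem upwardMultiplier_le_downwardMultiplier [DecidableEq ι] {X Y : ι → ℝ} {i : ι}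
    (h : ∀ k ≠ i, Y i < Y k → X i ≤ X k) : upwardMultiplier Y i ≤ downwardMultiplier X i := by
  have hsub : ({j | Y i < Y j} : Finset ι) ⊆ ({j | X i ≤ X j} : Finset ι).erase i := by
    intro k hk
    have hki : k ≠ i := by rintro rfl; simp at hk
    simp_all
  have := card_le_card hsub
  rw [card_erase_of_mem (by simp)] at this
  have := one_le_downwardMultiplier X i
  unfold upwardMultiplier downwardMultiplier at *
  omega

theorem upwardMultiplier_mul_eq [DecidableEq ι] (X : ι → ℝ) (i : ι) (d : ℝ) :
    (upwardMultiplier X i : ℝ) * d = d + ∑ j ∈ univ.erase i, if X i < X j then d else 0 := by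
  rw [sum_ite, sum_const_zero, add_zero, sum_const, nsmul_eq_mul, filter_erase,
    erase_eq_of_notMem (by simp), upwardMultiplier]
  push_cast
  ring

theorem downwardMultiplier_mul_eq [DecidableEq ι] (X : ι → ℝ) (i : ι) (d : ℝ) :
    (downwardMultiplier X i : ℝ) * d = d + ∑ j ∈ univ.erase i, if X i ≤ X j then d else 0 := by
  rw [sum_ite, sum_const_zero, add_zero, sum_const, nsmul_eq_mul, filter_erase, downwardMultiplier,
    ← card_erase_add_one (s := ({j | X i ≤ X j} : Finset ι)) (a := i) (by simp)]
  push_cast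
  ring

end Multipliers

section Admissible

variable {ι : Type*} [Fintype ι] {E : ι → ℕ → ℝ}

def IsAdmissible (E : ι → ℕ → ℝ) (θ : ι → ℝ) : Prop :=
  ∀ j, E j (upwardMultiplier θ j) ≤ θ j

noncomputable def minAdmissible (E : ι → ℕ → ℝ) (i : ι) : ℝ :=
  sInf ((fun θ => θ i) '' {θ | IsAdmissible E θ})

theorem IsAdmissible.nonneg (hE0 : ∀ i m, 0 ≤ E i m) {θ : ι → ℝ} (hθ : IsAdmissible E θ)
    (j : ι) : 0 ≤ θ j :=
  (hE0 _ _).trans (hθ j)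

theorem IsAdmissible.update_of_le [DecidableEq ι] (hE : ∀ i, MonotoneOn (E i) (Set.Ici 1))
    {θ : ι → ℝ} (hθ : IsAdmissible E θ) {i : ι} {t : ℝ} (ht : t ≤ θ i)
    (hti : E i (upwardMultiplier (update θ i t) i) ≤ t) : IsAdmissible E (update θ i t) := by
  intro j
  rcases eq_or_ne j i with rfl | hji
  · simpa using hti
  have hle : upwardMultiplier (update θ i t) j ≤ upwardMultiplier θ j := by
    refine upwardMultiplier_le_upwardMultiplier fun k hk => ?_
    rw [update_of_ne hji] at hk
    exact hk.trans_le (by rcases eq_or_ne k i with rfl | hki <;> simp [*])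
  rw [update_of_ne hji]
  exact (hE j (one_le_upwardMultiplier _ _) (one_le_upwardMultiplier _ _) hle).trans (hθ j)

variable (hE0 : ∀ i m, 0 ≤ E i m)
include hE0

theorem bddBelow_image_isAdmissible (i : ι) :
    BddBelow ((fun θ => θ i) '' {θ | IsAdmissible E θ}) :=
  ⟨0, by rintro _ ⟨θ, hθ, rfl⟩; exact hθ.nonneg hE0 i⟩

theorem nonempty_image_isAdmissible (i : ι) :
    ((fun θ => θ i) '' {θ | IsAdmissible E θ}).Nonempty := by
  refine ⟨_, fun _ => ∑ j, E j 1, fun j => ?_, rfl⟩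
  rw [upwardMultiplier_const]
  exact single_le_sum (fun k _ => hE0 k 1) (mem_univ j)

theorem minAdmissible_le {θ : ι → ℝ} (hθ : IsAdmissible E θ) (i : ι) :
    minAdmissible E i ≤ θ i :=
  csInf_le (bddBelow_image_isAdmissible hE0 i) ⟨θ, hθ, rfl⟩

variable (hE : ∀ i, MonotoneOn (E i) (Set.Ici 1))
include hE

theorem isAdmissible_minAdmissible : IsAdmissible E (minAdmissible E) := by
  set θ := minAdmissible E
  intro i
  by_contra! hlt
  -- Near `θ i` there is an admissible vector; it puts at least as many agents above `i` as `θ`.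
  obtain ⟨δ, hδ, hgap⟩ := exists_pos_le_abs_sub θ (θ i)
  set ε := min δ (E i (upwardMultiplier θ i) - θ i)
  have hε : 0 < ε := lt_min hδ (sub_pos.2 hlt)
  have hεδ : ε ≤ δ := min_le_left _ _
  have hεE : ε ≤ E i (upwardMultiplier θ i) - θ i := min_le_right _ _
  obtain ⟨_, ⟨θ', hθ', rfl⟩, hθ'i⟩ :=
    exists_lt_of_csInf_lt (nonempty_image_isAdmissible hE0 i) (lt_add_of_pos_right (θ i) hε)
  have hle : upwardMultiplier θ i ≤ upwardMultiplier θ' i := by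
    refine upwardMultiplier_le_upwardMultiplier fun k hk => ?_
    have := hgap k hk.ne'
    rw [abs_of_pos (sub_pos.2 hk)] at this
    linarith [minAdmissible_le hE0 hθ' k]
  have := hE i (one_le_upwardMultiplier _ _) (one_le_upwardMultiplier _ _) hle
  linarith [hθ' i]

theorem minAdmissible_le_downwardMultiplier (i : ι) :
    minAdmissible E i ≤ E i (downwardMultiplier (minAdmissible E) i) := by
  classical
  set θ := minAdmissible E
  by_contra! hlt
  -- Lowering `θ i` to `t` just above the agents below `i` keeps `θ` admissible.
  obtain ⟨δ, hδ, hgap⟩ := exists_pos_le_abs_sub θ (θ i)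
  set t := max (E i (downwardMultiplier θ i)) (θ i - δ)
  have hti : t < θ i := max_lt hlt (by linarith)
  have hbelow : ∀ k, θ k < θ i → θ k ≤ t := fun k hk => by
    have := hgap k hk.ne
    rw [abs_of_neg (sub_neg.2 hk)] at this
    exact le_max_of_le_right (by linarith)
  have hmult : upwardMultiplier (update θ i t) i ≤ downwardMultiplier θ i := by
    refine upwardMultiplier_le_downwardMultiplier fun k hki hk => ?_
    rw [update_self, update_of_ne hki] at hk
    exact not_lt.1 fun hki' => (hbelow k hki').not_gt hk
  have hadm := (isAdmissible_minAdmissible hE0 hE).update_of_le hE hti.le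
    ((hE i (one_le_upwardMultiplier _ _) (one_le_downwardMultiplier _ _) hmult).trans
      (le_max_left _ _))
  have := minAdmissible_le hE0 hadm i
  simp only [update_self] at this
  exact this.not_gt hti

end Admissible

section Total

variable {n : ℕ}

theorem total_eq_sum_min (X : Fin n → ℝ) (i : Fin n) : total X i = ∑ j, min (X i) (X j) := by
  rw [total, filter_ne' univ i, ← add_sum_erase _ _ (mem_univ i), min_self]

theorem total_update_self (X : Fin n → ℝ) (i : Fin n) (y : ℝ) :
    total (update X i y) i = y + ∑ j ∈ univ.erase i, min y (X j) := by
  rw [total, filter_ne' univ i, update_self]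
  exact congrArg _ (sum_congr rfl fun j hj => by rw [update_of_ne (ne_of_mem_erase hj)])

theorem total_eq_add_sum_erase (X : Fin n → ℝ) (i : Fin n) :
    total X i = X i + ∑ j ∈ univ.erase i, min (X i) (X j) := by
  rw [← total_update_self, update_eq_self]

theorem total_nonneg {X : Fin n → ℝ} (hX : ∀ j, 0 ≤ X j) (i : Fin n) : 0 ≤ total X i :=
  add_nonneg (hX i) (sum_nonneg fun j _ => le_min (hX i) (hX j))

theorem total_le_total (X : Fin n → ℝ) {i j : Fin n} (h : X i ≤ X j) :
    total X i ≤ total X j := by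
  simp only [total_eq_sum_min]
  exact sum_le_sum fun k _ => min_le_min_right _ h

theorem total_lt_total (X : Fin n → ℝ) {i j : Fin n} (h : X i < X j) :
    total X i < total X j := by
  simp only [total_eq_sum_min]
  exact sum_lt_sum (fun k _ => min_le_min_right _ h.le) ⟨j, mem_univ j, by simpa using h⟩

theorem total_le_total_iff (X : Fin n → ℝ) {i j : Fin n} :
    total X i ≤ total X j ↔ X i ≤ X j :=
  ⟨fun h => not_lt.1 fun h' => (total_lt_total X h').not_ge h, total_le_total X⟩

theorem total_lt_total_iff (X : Fin n → ℝ) {i j : Fin n} :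
    total X i < total X j ↔ X i < X j :=
  ⟨fun h => not_le.1 fun h' => (total_le_total X h').not_gt h, total_lt_total X⟩

theorem upwardMultiplier_total (X : Fin n → ℝ) (i : Fin n) :
    upwardMultiplier (total X) i = upwardMultiplier X i := by
  simp only [upwardMultiplier, total_lt_total_iff]

theorem downwardMultiplier_total (X : Fin n → ℝ) (i : Fin n) :
    downwardMultiplier (total X) i = downwardMultiplier X i := by
  simp only [downwardMultiplier, total_le_total_iff]

variable (X : Fin n → ℝ) (i : Fin n) {y : ℝ}

theorem total_le_total_update (hy : X i ≤ y) : total X i ≤ total (update X i y) i := by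
  rw [total_update_self, total_eq_add_sum_erase]
  exact add_le_add hy (sum_le_sum fun j _ => min_le_min_right _ hy)

theorem total_update_le (hy : X i ≤ y) :
    total (update X i y) i ≤ total X i + upwardMultiplier X i * (y - X i) := by
  rw [total_update_self, total_eq_add_sum_erase, upwardMultiplier_mul_eq]
  have := sum_le_sum fun j (_ : j ∈ univ.erase i) =>
    show min y (X j) ≤ min (X i) (X j) + if X i < X j then y - X i else 0 by
      split_ifs with h
      · rw [min_eq_left h.le]; linarith [min_le_left y (X j)]
      · rw [min_eq_right (not_lt.1 h), min_eq_right ((not_lt.1 h).trans hy), add_zero]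
  rw [sum_add_distrib] at this
  linarith

theorem total_update_eq (hy : X i ≤ y) (hgap : ∀ k, X i < X k → y ≤ X k) :
    total (update X i y) i = total X i + upwardMultiplier X i * (y - X i) := by
  rw [total_update_self, total_eq_add_sum_erase, upwardMultiplier_mul_eq]
  have := sum_congr rfl fun j (_ : j ∈ univ.erase i) =>
    show min y (X j) = min (X i) (X j) + if X i < X j then y - X i else 0 by
      split_ifs with h
      · rw [min_eq_left h.le, min_eq_left (hgap j h)]; ring
      · rw [min_eq_right (not_lt.1 h), min_eq_right ((not_lt.1 h).trans hy), add_zero]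
  rw [this, sum_add_distrib]
  ring

theorem total_update_add_le (hy : y ≤ X i) :
    total (update X i y) i + downwardMultiplier X i * (X i - y) ≤ total X i := by
  rw [total_update_self, total_eq_add_sum_erase, downwardMultiplier_mul_eq]
  have := sum_le_sum fun j (_ : j ∈ univ.erase i) =>
    show min y (X j) + (if X i ≤ X j then X i - y else 0) ≤ min (X i) (X j) by
      split_ifs with h
      · rw [min_eq_left h, min_eq_left (hy.trans h)]; linarith
      · rw [add_zero]; exact min_le_min_right _ hy
  rw [sum_add_distrib] at this
  linarith

end Total

/-- Induction on `s`, adding the agent of least target last: it collects `(θ a - c) / (#s + 1)`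
and everybody else collects that much on top of their share for the targets `θ - θ a`. -/
theorem exists_nonneg_sum_min_eq_sub {ι : Type*} [DecidableEq ι] (θ : ι → ℝ) (s : Finset ι)
    {c : ℝ} (hc : ∀ i ∈ s, c ≤ θ i) :
    ∃ X : ι → ℝ, (∀ i ∈ s, 0 ≤ X i) ∧ ∀ i ∈ s, ∑ j ∈ s, min (X i) (X j) = θ i - c := by
  induction s using Finset.induction_on_min_value θ generalizing c with
  | empty => exact ⟨0, by simp, by simp⟩
  | insert a s ha hmin ih =>
    obtain ⟨X, hX0, hX⟩ := ih hmin
    set α := (θ a - c) / (#s + 1)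
    have hα : 0 ≤ α := div_nonneg (sub_nonneg.2 (hc a (mem_insert_self a s))) (by positivity)
    have hαs : (#s + 1) * α = θ a - c := mul_div_cancel₀ _ (by positivity)
    set Y : ι → ℝ := fun j => if j = a then α else X j + α
    have hYa : Y a = α := if_pos rfl
    have hYs : ∀ j ∈ s, Y j = X j + α := fun j hj => if_neg (ne_of_mem_of_not_mem hj ha)
    refine ⟨Y, fun i hi => ?_, fun i hi => ?_⟩
    · rcases mem_insert.1 hi with rfl | hi
      · rwa [hYa]
      · rw [hYs i hi]; linarith [hX0 i hi]
    · rw [sum_insert ha, hYa]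
      rcases mem_insert.1 hi with rfl | hi
      · rw [hYa, min_self, sum_congr rfl fun j hj => by
          rw [hYs j hj, min_eq_left (le_add_of_nonneg_left (hX0 j hj))], sum_const, nsmul_eq_mul]
        linarith
      · rw [hYs i hi, min_eq_right (le_add_of_nonneg_left (hX0 i hi)), sum_congr rfl fun j hj => by
          rw [hYs j hj, min_add_add_right], sum_add_distrib, hX i hi, sum_const, nsmul_eq_mul]
        linarith

theorem exists_nonneg_total_eq {n : ℕ} (θ : Fin n → ℝ) (hθ : ∀ i, 0 ≤ θ i) :
    ∃ X : Fin n → ℝ, (∀ i, 0 ≤ X i) ∧ total X = θ := by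
  obtain ⟨X, hX0, hX⟩ := exists_nonneg_sum_min_eq_sub θ univ fun i _ => hθ i
  exact ⟨X, fun i => hX0 i (mem_univ i), funext fun i => by
    rw [total_eq_sum_min, hX i (mem_univ i), sub_zero]⟩

section Equilibrium

variable {n : ℕ} {b : Fin n → ℝ → ℝ} {c : Fin n → ℝ}

noncomputable def satiationThreshold (b : Fin n → ℝ → ℝ) (c : Fin n → ℝ) (i : Fin n) (m : ℕ) :
    ℝ :=
  satiationLevel (b i) (c i / m)

theorem satiationThreshold_monotoneOn {i : Fin n} (hc : 0 < c i)
    (hb : ConcaveOn ℝ (Set.Ici 0) (b i))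
    (hvan : Tendsto (fun t => b i (t + 1) - b i t) atTop (𝓝 0)) :
    MonotoneOn (satiationThreshold b c i) (Set.Ici 1) := fun m hm m' _ hmm' => by
  have hm : (0 : ℝ) < m := Nat.cast_pos.2 hm
  exact satiationLevel_antitoneOn hb hvan (div_pos hc (hm.trans_le (by exact_mod_cast hmm')))
    (div_pos hc hm) (div_le_div_of_nonneg_left hc.le hm (by exact_mod_cast hmm'))

theorem total_mem_satiatedSet_of_isNE {X : Fin n → ℝ} (hX : IsNE b c X) {i : Fin n}
    (hb : ConcaveOn ℝ (Set.Ici 0) (b i)) :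
    total X i ∈ satiatedSet (b i) (c i / upwardMultiplier X i) := by
  set T := total X i
  set m : ℝ := (upwardMultiplier X i : ℝ)
  have hm : 0 < m := Nat.cast_pos.2 (one_le_upwardMultiplier X i)
  have hT : 0 ≤ T := total_nonneg hX.1 i
  refine ⟨hT, fun u hu => ?_⟩
  rcases hu.eq_or_lt with rfl | hlt
  · simp
  -- Raise `X i` so little that nobody is overtaken: the total reaches `v ∈ (T, u]` exactly.
  obtain ⟨δ, hδ, hgap⟩ := exists_pos_le_abs_sub X (X i)
  set v := min u (T + m * δ)
  have hTv : T < v := lt_min hlt (lt_add_of_pos_right T (mul_pos hm hδ))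
  set y := X i + (v - T) / m
  have hyδ : (v - T) / m ≤ δ := (div_le_iff₀' hm).2 (by linarith [min_le_right u (T + m * δ)])
  have hXy : X i ≤ y := le_add_of_nonneg_right (div_nonneg (by linarith) hm.le)
  have htotal : total (update X i y) i = v := by
    rw [total_update_eq X i hXy fun k hk => ?_]
    · simp only [y, T]; field_simp; ring
    · have := hgap k hk.ne'
      rw [abs_of_pos (sub_pos.2 hk)] at this
      linarith
  have hdev := hX.2 i y (by linarith [hX.1 i])
  simp only [U, htotal, update_self] at hdev
  have hvT : b i v - b i T ≤ c i / m * (v - T) := by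
    have : c i / m * (v - T) = c i * (y - X i) := by simp only [y]; field_simp; ring
    linarith
  have hvu := hb.sub_le_mul_sub_of_sub_le_mul_sub hT (hT.trans hu) hTv (min_le_left u _) hvT
  linarith

theorem IsNE.isAdmissible_total {X : Fin n → ℝ} (hX : IsNE b c X)
    (hb : ∀ i, ConcaveOn ℝ (Set.Ici 0) (b i)) : IsAdmissible (satiationThreshold b c) (total X) :=
  fun i => by
    rw [upwardMultiplier_total]
    exact satiationLevel_le (total_mem_satiatedSet_of_isNE hX (hb i))

theorem utility_update_le_of_le {X : Fin n → ℝ} {i : Fin n} {y : ℝ} (hc : 0 < c i)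
    (hT : total X i ∈ satiatedSet (b i) (c i / upwardMultiplier X i)) (hy : X i ≤ y) :
    U b c (update X i y) i ≤ U b c X i := by
  have hm : (0 : ℝ) < upwardMultiplier X i := Nat.cast_pos.2 (one_le_upwardMultiplier X i)
  have hgain := hT.2 _ (total_le_total_update X i hy)
  have hbound := total_update_le X i hy
  have : c i / upwardMultiplier X i * (total (update X i y) i - total X i) ≤ c i * (y - X i) := by
    calc _ ≤ c i / upwardMultiplier X i * (upwardMultiplier X i * (y - X i)) :=
          mul_le_mul_of_nonneg_left (by linarith) (div_nonneg hc.le hm.le)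
      _ = c i * (y - X i) := by field_simp
  simp only [U, update_self]
  linarith

theorem utility_update_le_of_ge {X : Fin n → ℝ} (hX : ∀ j, 0 ≤ X j) {i : Fin n} {y : ℝ}
    (hc : 0 < c i) (hb : ConcaveOn ℝ (Set.Ici 0) (b i)) (hbc : ContinuousOn (b i) (Set.Ici 0))
    (hT : total X i ≤ satiationLevel (b i) (c i / downwardMultiplier X i)) (hy0 : 0 ≤ y)
    (hy : y ≤ X i) : U b c (update X i y) i ≤ U b c X i := by
  have hm : (0 : ℝ) < downwardMultiplier X i := Nat.cast_pos.2 (one_le_downwardMultiplier X i)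
  have hloss := total_update_add_le X i hy
  have hdev0 : 0 ≤ total (update X i y) i :=
    total_nonneg (fun j => by rcases eq_or_ne j i with rfl | h <;> simp [*]) i
  have hsteep := mul_sub_le_sub_of_le_satiationLevel hb hbc hdev0
    (by linarith [mul_nonneg hm.le (sub_nonneg.2 hy)]) hT
  have : c i * (X i - y) ≤ c i / downwardMultiplier X i * (total X i - total (update X i y) i) := by
    calc c i * (X i - y) = c i / downwardMultiplier X i * (downwardMultiplier X i * (X i - y)) := by
          field_simp
      _ ≤ _ := mul_le_mul_of_nonneg_left (by linarith) (div_nonneg hc.le hm.le)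
  simp only [U, update_self]
  linarith

theorem isNE_of_total (hc : ∀ i, 0 < c i) (hbc : ∀ i, ContinuousOn (b i) (Set.Ici 0))
    (hbconc : ∀ i, ConcaveOn ℝ (Set.Ici 0) (b i))
    (hvanish : ∀ i, Tendsto (fun t => b i (t + 1) - b i t) atTop (𝓝 0))
    {X : Fin n → ℝ} (hX : ∀ i, 0 ≤ X i) (hadm : IsAdmissible (satiationThreshold b c) (total X))
    (hdown : ∀ i, total X i ≤ satiationThreshold b c i (downwardMultiplier (total X) i)) :
    IsNE b c X := by
  refine ⟨hX, fun i y hy => ?_⟩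
  rcases le_total (X i) y with hup | hdn
  · have hsat := mem_satiatedSet_of_le (hbconc i)
      (satiationLevel_mem (hbconc i) (hbc i) (div_pos (hc i) (Nat.cast_pos.2
        (one_le_upwardMultiplier X i))) (hvanish i)) (upwardMultiplier_total X i ▸ hadm i)
    exact utility_update_le_of_le (hc i) hsat hup
  · exact utility_update_le_of_ge hX (hc i) (hbconc i) (hbc i)
      (downwardMultiplier_total X i ▸ hdown i) hy hdn

end Equilibrium

theorem exists_minimal_equilibrium_general (n : ℕ)
    (b : Fin n → ℝ → ℝ) (c : Fin n → ℝ)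
    (hc : ∀ i, 0 < c i)
    (hbc : ∀ i, ContinuousOn (b i) (Set.Ici 0))
    (hbconc : ∀ i, ConcaveOn ℝ (Set.Ici 0) (b i))
    (hvanish : ∀ i, Filter.Tendsto (fun t : ℝ => b i (t + 1) - b i t)
      Filter.atTop (nhds 0)) :
    ∃ Xstar : Fin n → ℝ, IsNE b c Xstar ∧
      ∀ X' : Fin n → ℝ, IsNE b c X' → ∀ i, total Xstar i ≤ total X' i := by
  have hE0 : ∀ i m, 0 ≤ satiationThreshold b c i m := fun _ _ => satiationLevel_nonneg
  have hE : ∀ i, MonotoneOn (satiationThreshold b c i) (Set.Ici 1) := fun i =>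
    satiationThreshold_monotoneOn (hc i) (hbconc i) (hvanish i)
  have hadm := isAdmissible_minAdmissible hE0 hE
  obtain ⟨X, hX0, hX⟩ := exists_nonneg_total_eq _ (hadm.nonneg hE0)
  refine ⟨X, isNE_of_total hc hbc hbconc hvanish hX0 (hX ▸ hadm)
    (hX ▸ minAdmissible_le_downwardMultiplier hE0 hE), fun X' hX' i => ?_⟩
  rw [hX]
  exact minAdmissible_le hE0 (hX'.isAdmissible_total hbconc) i

/-- Existence of a minimal equilibrium: there is a pure Nash equilibrium `X_*` whose
total-data vector is componentwise dominated by that of every pure Nash equilibrium. -/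
theorem exists_minimal_equilibrium (n : ℕ) (hn : 1 ≤ n)
    (b : Fin n → ℝ → ℝ) (c : Fin n → ℝ)
    (hc : ∀ i, 0 < c i)
    (hbc : ∀ i, ContinuousOn (b i) (Set.Ici 0))
    (hbm : ∀ i, MonotoneOn (b i) (Set.Ici 0))
    (hbconc : ∀ i, ConcaveOn ℝ (Set.Ici 0) (b i))
    (hvanish : ∀ i, Filter.Tendsto (fun t : ℝ => b i (t + 1) - b i t)
      Filter.atTop (nhds 0)) :
    ∃ Xstar : Fin n → ℝ, IsNE b c Xstar ∧
      ∀ X' : Fin n → ℝ, IsNE b c X' → ∀ i, total Xstar i ≤ total X' i :=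
  exists_minimal_equilibrium_general n b c hc hbc hbconc hvanish
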